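/- arXiv:1809.06979 — 5 statements merged into one kernel-verified Lean document; each statement's English description precedes it below -/
import Mathlib

section
/- The third-order Jacobsthal numbers satisfy the Binet-style formula J_n = (1/7)(2^{n+1} - V_n), where V_n is the periodic sequence with V_n = 2 if n ≡ 0 (mod 3), V_n = -3 if n ≡ 1 (mod 3), and V_n = 1 if n ≡ 2 (mod 3). -/
/-!
The recurrence has characteristic polynomial `X³ - X² - X - 2 = (X - 2)(X² + X + 1)`. The root `2`
gives the solution `2ⁿ`, and the roots of `X² + X + 1` are the primitive cube roots of unity, so
every `3`-periodic sequence whose values over a period sum to zero is a solution too; `V3` is one.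
Hence `7 J3` and `2ⁿ⁺¹ - V3` solve the same third-order recurrence, and they agree for `n = 0, 1, 2`.
-/

def J3 : ℕ → ℤ
  | 0 => 0
  | 1 => 1
  | 2 => 1
  | (n + 3) => J3 (n + 2) + J3 (n + 1) + 2 * J3 n

def V3 (n : ℕ) : ℤ := if n % 3 = 0 then 2 else if n % 3 = 1 then -3 else 1

def jacobsthal3Recurrence : LinearRecurrence ℤ := ⟨3, ![2, 1, 1]⟩

namespace jacobsthal3Recurrence

theorem isSolution_iff (u : ℕ → ℤ) :
    jacobsthal3Recurrence.IsSolution u ↔ ∀ n, u (n + 3) = u (n + 2) + u (n + 1) + 2 * u n := by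
  refine forall_congr' fun n => ?_
  show u (n + 3) = ∑ i : Fin 3, ![2, 1, 1] i * u (n + i) ↔ _
  simp only [Fin.sum_univ_three, Fin.isValue, Matrix.cons_val, Fin.val_zero, Fin.val_one,
    Fin.val_two]
  ring_nf

theorem isSolution_J3 : jacobsthal3Recurrence.IsSolution J3 :=
  (isSolution_iff J3).2 fun _ => rfl

theorem isSolution_two_pow : jacobsthal3Recurrence.IsSolution fun n => 2 ^ n :=
  (isSolution_iff _).2 fun n => by ring

theorem isSolution_of_periodic {u : ℕ → ℤ} (hper : Function.Periodic u 3)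
    (hsum : u 0 + u 1 + u 2 = 0) : jacobsthal3Recurrence.IsSolution u := by
  have hsum_all : ∀ n, u n + u (n + 1) + u (n + 2) = 0 := by
    intro n
    induction n with
    | zero => exact hsum
    | succ n ih => linarith [hper n]
  refine (isSolution_iff u).2 fun n => ?_
  linarith [hper n, hsum_all n]

theorem V3_periodic : Function.Periodic V3 3 := by
  intro n
  simp only [V3, Nat.add_mod_right]

theorem isSolution_V3 : jacobsthal3Recurrence.IsSolution V3 :=
  isSolution_of_periodic V3_periodic (by decide)

end jacobsthal3Recurrence

theorem binet_third_order_jacobsthal (n : ℕ) :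
    7 * J3 n = 2 ^ (n + 1) - V3 n := by
  let E := jacobsthal3Recurrence
  have hJ : E.IsSolution fun n => 7 * J3 n :=
    E.solSpace.smul_mem 7 jacobsthal3Recurrence.isSolution_J3
  have hBinet : E.IsSolution fun n => 2 ^ (n + 1) - V3 n := by
    simp only [pow_succ']
    exact E.solSpace.sub_mem (E.solSpace.smul_mem 2 jacobsthal3Recurrence.isSolution_two_pow)
      jacobsthal3Recurrence.isSolution_V3
  have hinit : Set.EqOn (fun n => 7 * J3 n) (fun n => 2 ^ (n + 1) - V3 n) ↑(Finset.range 3) := by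
    intro k hk
    rw [Finset.coe_range, Set.mem_Iio] at hk
    interval_cases k <;> rfl
  exact congrFun ((E.eq_iff_eqOn_range_order _ _ hJ hBinet).2 hinit) n
end

section
/- The sum of the first n+1 third-order Jacobsthal numbers satisfies: ∑_{s=0}^{n} J_s = (1/3)(J_{n+2} + 2·J_n - 1). Equivalently, 3·∑_{s=0}^{n} J_s = J_{n+2} + 2·J_n - 1. -/
theorem J3_add_three (n : ℕ) : J3 (n + 3) = J3 (n + 2) + J3 (n + 1) + 2 * J3 n := by
  rw [J3]

theorem sum_third_order_jacobsthal (n : ℕ) :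
    3 * ∑ s ∈ Finset.range (n + 1), J3 s = J3 (n + 2) + 2 * J3 n - 1 := by
  induction n with
  | zero => simp [J3]
  | succ k ih =>
    rw [Finset.sum_range_succ, mul_add, ih, J3_add_three]
    ring
end

section
/- The sum of the first n+1 third-order Jacobsthal numbers equals J_{n+1} - 1 if n ≡ 0 (mod 3), and equals J_{n+1} otherwise. -/
section Recurrence

variable {R : Type*} [CommRing R] (u : ℕ → R)

theorem sum_range_sub_two_mul (m : ℕ) :
    ∑ s ∈ Finset.range m, (u (s + 1) - 2 * u s) = u m - u 0 - ∑ s ∈ Finset.range m, u s := by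
  calc ∑ s ∈ Finset.range m, (u (s + 1) - 2 * u s)
      = ∑ s ∈ Finset.range m, ((u (s + 1) - u s) - u s) := by
        refine Finset.sum_congr rfl fun s _ => ?_
        ring
    _ = u m - u 0 - ∑ s ∈ Finset.range m, u s := by
        rw [Finset.sum_sub_distrib, Finset.sum_range_sub]

theorem sub_two_mul_periodic (hu : ∀ n, u (n + 3) = u (n + 2) + u (n + 1) + 2 * u n) (n : ℕ) :
    u (n + 4) - 2 * u (n + 3) = u (n + 1) - 2 * u n := by
  rw [hu (n + 1), hu n]
  ring

end Recurrence

theorem J3_succ_sub_two_mul (n : ℕ) :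
    J3 (n + 1) - 2 * J3 n = if n % 3 = 0 then 1 else if n % 3 = 1 then -1 else 0 := by
  induction n using Nat.strong_induction_on with
  | _ n ih =>
    match n with
    | 0 | 1 | 2 => rfl
    | m + 3 =>
      rw [sub_two_mul_periodic J3 (fun _ => rfl), ih m (by omega)]
      simp only [Nat.add_mod_right]

theorem sum_range_J3_succ_sub_two_mul (n : ℕ) :
    ∑ s ∈ Finset.range (n + 1), (J3 (s + 1) - 2 * J3 s) = if n % 3 = 0 then 1 else 0 := by
  induction n with
  | zero => rfl
  | succ n ih =>
    rw [Finset.sum_range_succ, ih, J3_succ_sub_two_mul]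
    split_ifs <;> omega

theorem sum_third_order_jacobsthal_cases (n : ℕ) :
    ∑ s ∈ Finset.range (n + 1), J3 s =
      if n % 3 = 0 then J3 (n + 1) - 1 else J3 (n + 1) := by
  have h := sum_range_sub_two_mul J3 (n + 1)
  rw [sum_range_J3_succ_sub_two_mul, J3] at h
  split_ifs at h ⊢ <;> linarith
end

section
/- For the bicomplex third-order Jacobsthal quaternion BC_n, the sum of the first n+1 terms satisfies: ∑_{s=0}^{n} BC_s = S(n) + i·S(n+1) + j·(S(n+2) - 1) + ij·(S(n+3) - 2), where S(m) = (1/3)(J_{m+2} + 2J_m - 1) is the sum of the first m+1 third-order Jacobsthal numbers. -/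
/-- The bicomplex third-order Jacobsthal quaternion, as a 4-tuple. -/
def BCJ (n : ℕ) : ℤ × ℤ × ℤ × ℤ := (J3 n, J3 (n + 1), J3 (n + 2), J3 (n + 3))

/-- Sum of the first `m + 1` third-order Jacobsthal numbers. -/
def S3 (m : ℕ) : ℤ := ∑ s ∈ Finset.range (m + 1), J3 s

open Finset

theorem sum_range_J3_add (n k : ℕ) :
    ∑ s ∈ range (n + 1), J3 (s + k) = S3 (n + k) - ∑ s ∈ range k, J3 s := by
  rw [S3, show n + k + 1 = k + (n + 1) by omega, sum_range_add J3 k, add_sub_cancel_left]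
  simp only [add_comm k]

theorem sum_BCJ (n : ℕ) :
    ∑ s ∈ Finset.range (n + 1), BCJ s =
      (S3 n, S3 (n + 1), S3 (n + 2) - 1, S3 (n + 3) - 2) := by
  simp only [BCJ, Prod.ext_iff, Prod.fst_sum, Prod.snd_sum]
  -- The corrections 0, 1, 2 are the initial sums `J₀`, `J₀ + J₁`, `J₀ + J₁ + J₂`.
  refine ⟨rfl, ?_, ?_, ?_⟩ <;>
    (rw [sum_range_J3_add]; simp [sum_range_succ, J3])
end

section
/- If n ≡ 0 (mod 3), then ∑_{s=0}^{n} BC_s = (J_{n+1} - 1) + i·J_{n+2} + j·(J_{n+3} - 1) + ij·(J_{n+4} - 3); if n ≡ 1 (mod 3), it equals J_{n+1} + i·J_{n+2} + j·(J_{n+3} - 2) + ij·(J_{n+4} - 2); if n ≡ 2 (mod 3), it equals J_{n+1} + i·(J_{n+2} - 1) + j·(J_{n+3} - 1) + ij·(J_{n+4} - 2). -/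
open Finset

lemma periodic_J3_sub_sum_range :
    Function.Periodic (fun n ↦ J3 n - ∑ s ∈ range n, J3 s) 3 := by
  intro n
  simp only [J3, sum_range_succ]
  ring

lemma sum_range_J3 (n : ℕ) :
    ∑ s ∈ range n, J3 s = J3 n - if n % 3 = 1 then 1 else 0 := by
  have hmod := periodic_J3_sub_sum_range.map_mod_nat n
  have hlt : n % 3 < 3 := Nat.mod_lt n (by norm_num)
  interval_cases h : n % 3 <;> simp [sum_range_succ, J3] at hmod ⊢ <;> linarith

lemma sum_range_BCJ (n : ℕ) : ∑ s ∈ range (n + 1), BCJ s =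
    (∑ s ∈ range (n + 1), J3 s, ∑ s ∈ range (n + 2), J3 s,
      ∑ s ∈ range (n + 3), J3 s - 1, ∑ s ∈ range (n + 4), J3 s - 2) := by
  simp only [BCJ, Prod.ext_iff, Prod.fst_sum, Prod.snd_sum, true_and]
  refine ⟨?_, ?_, ?_⟩ <;> simp [sum_range_succ' _ (n + _), J3, add_assoc]

theorem sum_BCJ_cases (n : ℕ) :
    (n % 3 = 0 → ∑ s ∈ Finset.range (n + 1), BCJ s =
      (J3 (n + 1) - 1, J3 (n + 2), J3 (n + 3) - 1, J3 (n + 4) - 3)) ∧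
    (n % 3 = 1 → ∑ s ∈ Finset.range (n + 1), BCJ s =
      (J3 (n + 1), J3 (n + 2), J3 (n + 3) - 2, J3 (n + 4) - 2)) ∧
    (n % 3 = 2 → ∑ s ∈ Finset.range (n + 1), BCJ s =
      (J3 (n + 1), J3 (n + 2) - 1, J3 (n + 3) - 1, J3 (n + 4) - 2)) := by
  simp only [sum_range_BCJ, sum_range_J3]
  refine ⟨fun h ↦ ?_, fun h ↦ ?_, fun h ↦ ?_⟩ <;> simp [Nat.add_mod, h] <;> omega
end
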